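/- arXiv:0804.4613 — 2 statements merged into one kernel-verified Lean document; each statement's English description precedes it below -/
import Mathlib

section
/- For every ε > 0 there exist constants 0 < c ≤ C such that c e^{α(Λ)|z|²} ≤ |σ_Λ(z)| ≤ C e^{α(Λ)|z|²} for all z ∈ ℂ with dist(z, Λ) > ε, where α(Λ) = π/(2s(Λ)). -/
theorem modified_sigma_two_sided_bound (ω₁ ω₂ : ℂ) (hτ : 0 < (ω₂ / ω₁).im)
    (σΛ : ℂ → ℂ) (hcont : Continuous σΛ)
    (s : ℝ) (hs : s = ((starRingEnd ℂ) ω₁ * ω₂).im)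
    (α : ℝ) (hα : α = Real.pi / (2 * s))
    (hzero : ∀ z : ℂ, σΛ z = 0 ↔ ∃ m n : ℤ, z = (m : ℂ) * ω₁ + (n : ℂ) * ω₂)
    (hper : ∀ z : ℂ,
      ‖σΛ (z + ω₁)‖ * Real.exp (-α * ‖z + ω₁‖ ^ 2)
        = ‖σΛ z‖ * Real.exp (-α * ‖z‖ ^ 2) ∧
      ‖σΛ (z + ω₂)‖ * Real.exp (-α * ‖z + ω₂‖ ^ 2)
        = ‖σΛ z‖ * Real.exp (-α * ‖z‖ ^ 2)) :
    ∀ ε > (0 : ℝ), ∃ c C : ℝ, 0 < c ∧ c ≤ C ∧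
      ∀ z : ℂ,
        ε < Metric.infDist z {w : ℂ | ∃ m n : ℤ, w = (m : ℂ) * ω₁ + (n : ℂ) * ω₂} →
        c * Real.exp (α * ‖z‖ ^ 2) ≤ ‖σΛ z‖ ∧
          ‖σΛ z‖ ≤ C * Real.exp (α * ‖z‖ ^ 2) := by
  intro ε hε
  set Λ : Set ℂ := {w : ℂ | ∃ m n : ℤ, w = (m : ℂ) * ω₁ + (n : ℂ) * ω₂} with hΛ
  have hω₁ : ω₁ ≠ 0 := by
    rintro rfl; simp at hτ
  -- area is positive
  have hs0 : 0 < s := by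
    have h1 : (starRingEnd ℂ) ω₁ * ω₂ = (Complex.normSq ω₁ : ℂ) * (ω₂ / ω₁) := by
      rw [Complex.normSq_eq_conj_mul_self]; field_simp
    have h2 : s = Complex.normSq ω₁ * (ω₂ / ω₁).im := by
      rw [hs, h1]; simp [Complex.mul_im]
    rw [h2]
    exact mul_pos (Complex.normSq_pos.mpr hω₁) hτ
  have hsre : s = ω₁.re * ω₂.im - ω₁.im * ω₂.re := by
    rw [hs]; simp [Complex.mul_im]; ring
  -- coordinates
  have hcoord : ∀ z : ℂ, ∃ a b : ℝ, z = (a : ℂ) * ω₁ + (b : ℂ) * ω₂ := by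
    intro z
    refine ⟨(ω₂.im * z.re - ω₂.re * z.im) / s, (ω₁.re * z.im - ω₁.im * z.re) / s, ?_⟩
    have hsne : s ≠ 0 := ne_of_gt hs0
    apply Complex.ext <;>
      · simp [Complex.add_re, Complex.add_im, Complex.mul_re, Complex.mul_im,
          Complex.ofReal_re, Complex.ofReal_im]
        field_simp
        rw [hsre]; ring
  -- the periodic function g
  set g : ℂ → ℝ := fun z => ‖σΛ z‖ * Real.exp (-α * ‖z‖ ^ 2) with hg
  have hgc : Continuous g := by
    apply hcont.norm.mul
    exact Real.continuous_exp.comp (by fun_prop)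
  have hP1 : Function.Periodic g ω₁ := fun z => (hper z).1
  have hP2 : Function.Periodic g ω₂ := fun z => (hper z).2
  have ginv : ∀ (z : ℂ) (m n : ℤ), g (z + (m : ℂ) * ω₁ + (n : ℂ) * ω₂) = g z := by
    intro z m n
    have h1 := (hP1.zsmul m) z
    have h2 := (hP2.zsmul n) (z + (m : ℂ) * ω₁)
    simp only [zsmul_eq_mul] at h1 h2
    rw [h2, h1]
  -- membership of lattice translations
  have hmem : ∀ (p : ℂ) (m n : ℤ), p ∈ Λ → p + (m : ℂ) * ω₁ + (n : ℂ) * ω₂ ∈ Λ := by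
    rintro p m n ⟨m', n', rfl⟩
    exact ⟨m' + m, n' + n, by push_cast; ring⟩
  have hΛne : Λ.Nonempty := ⟨0, 0, 0, by simp⟩
  haveI : Nonempty Λ := hΛne.to_subtype
  -- infDist invariance
  have hle : ∀ (z : ℂ) (m n : ℤ),
      Metric.infDist (z + (m : ℂ) * ω₁ + (n : ℂ) * ω₂) Λ ≤ Metric.infDist z Λ := by
    intro z m n
    rw [Metric.infDist_eq_iInf (s := Λ) (x := z)]
    apply le_ciInf
    intro y
    have hy : (y : ℂ) + (m : ℂ) * ω₁ + (n : ℂ) * ω₂ ∈ Λ := hmem y m n y.2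
    calc Metric.infDist (z + (m : ℂ) * ω₁ + (n : ℂ) * ω₂) Λ
        ≤ dist (z + (m : ℂ) * ω₁ + (n : ℂ) * ω₂) ((y : ℂ) + (m : ℂ) * ω₁ + (n : ℂ) * ω₂) :=
          Metric.infDist_le_dist_of_mem hy
      _ = dist z (y : ℂ) := by
          rw [dist_eq_norm, dist_eq_norm]; ring_nf
  have hID : ∀ (z : ℂ) (m n : ℤ),
      Metric.infDist (z + (m : ℂ) * ω₁ + (n : ℂ) * ω₂) Λ = Metric.infDist z Λ := by
    intro z m n
    refine le_antisymm (hle z m n) ?_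
    have := hle (z + (m : ℂ) * ω₁ + (n : ℂ) * ω₂) (-m) (-n)
    have heq : z + (m : ℂ) * ω₁ + (n : ℂ) * ω₂ + ((-m : ℤ) : ℂ) * ω₁ + ((-n : ℤ) : ℂ) * ω₂ = z := by
      push_cast; ring
    rwa [heq] at this
  -- the fundamental domain
  set K : Set ℂ := (fun p : ℝ × ℝ => (p.1 : ℂ) * ω₁ + (p.2 : ℂ) * ω₂) ''
      (Set.Icc 0 1 ×ˢ Set.Icc 0 1) with hK
  have hKcomp : IsCompact K :=
    (isCompact_Icc.prod isCompact_Icc).image (by fun_prop)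
  have hKne : K.Nonempty :=
    ⟨0, ⟨(0, 0), by simp⟩⟩
  -- every point has a representative in K
  have hrep : ∀ z : ℂ, ∃ w ∈ K, ∃ m n : ℤ, z = w + (m : ℂ) * ω₁ + (n : ℂ) * ω₂ := by
    intro z
    obtain ⟨a, b, hab⟩ := hcoord z
    refine ⟨((Int.fract a : ℝ) : ℂ) * ω₁ + ((Int.fract b : ℝ) : ℂ) * ω₂, ⟨(Int.fract a, Int.fract b),
      ⟨⟨(Int.fract_nonneg a), (Int.fract_lt_one a).le⟩,
       ⟨(Int.fract_nonneg b), (Int.fract_lt_one b).le⟩⟩, rfl⟩, ⌊a⌋, ⌊b⌋, ?_⟩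
    rw [hab]
    simp only [Int.fract]
    push_cast
    ring
  -- maximum on K
  obtain ⟨w₀, hw₀K, hmax⟩ := hKcomp.exists_isMaxOn hKne hgc.continuousOn
  -- conversion lemma
  have hconv : ∀ (t : ℝ) (z : ℂ), t * Real.exp (-α * ‖z‖ ^ 2) * Real.exp (α * ‖z‖ ^ 2) = t := by
    intro t z
    rw [mul_assoc, ← Real.exp_add, neg_mul, neg_add_cancel, Real.exp_zero, mul_one]
  set S : Set ℂ := K ∩ {w : ℂ | ε ≤ Metric.infDist w Λ} with hS
  by_cases hSne : S.Nonempty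
  · -- minimum on S
    have hScomp : IsCompact S :=
      hKcomp.inter_right (isClosed_le continuous_const (Metric.continuous_infDist_pt Λ))
    obtain ⟨w₁, hw₁S, hmin⟩ := hScomp.exists_isMinOn hSne hgc.continuousOn
    have hw₁Λ : w₁ ∉ Λ := by
      intro hmemΛ
      have := Metric.infDist_zero_of_mem hmemΛ
      have h2 := hw₁S.2
      simp only [Set.mem_setOf_eq] at h2
      rw [this] at h2
      linarith
    have hc0 : 0 < g w₁ := by
      apply mul_pos _ (Real.exp_pos _)
      rw [norm_pos_iff]
      intro h0
      exact hw₁Λ ((hzero w₁).mp h0)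
    refine ⟨g w₁, g w₀, hc0, hmax hw₁S.1, ?_⟩
    intro z hz
    obtain ⟨w, hwK, m, n, rfl⟩ := hrep z
    have hgz : g (w + (m : ℂ) * ω₁ + (n : ℂ) * ω₂) = g w := ginv w m n
    have hdz : Metric.infDist w Λ = Metric.infDist (w + (m : ℂ) * ω₁ + (n : ℂ) * ω₂) Λ :=
      (hID w m n).symm
    have hwS : w ∈ S := ⟨hwK, by simp only [Set.mem_setOf_eq]; rw [hdz]; exact hz.le⟩
    constructor
    · have h1 : g w₁ ≤ g (w + (m : ℂ) * ω₁ + (n : ℂ) * ω₂) := by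
        rw [hgz]; exact hmin hwS
      calc g w₁ * Real.exp (α * ‖w + (m : ℂ) * ω₁ + (n : ℂ) * ω₂‖ ^ 2)
          ≤ g (w + (m : ℂ) * ω₁ + (n : ℂ) * ω₂) *
              Real.exp (α * ‖w + (m : ℂ) * ω₁ + (n : ℂ) * ω₂‖ ^ 2) :=
            mul_le_mul_of_nonneg_right h1 (Real.exp_pos _).le
        _ = ‖σΛ (w + (m : ℂ) * ω₁ + (n : ℂ) * ω₂)‖ := hconv _ _
    · have h1 : g (w + (m : ℂ) * ω₁ + (n : ℂ) * ω₂) ≤ g w₀ := by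
        rw [hgz]; exact hmax hwK
      calc ‖σΛ (w + (m : ℂ) * ω₁ + (n : ℂ) * ω₂)‖
          = g (w + (m : ℂ) * ω₁ + (n : ℂ) * ω₂) *
              Real.exp (α * ‖w + (m : ℂ) * ω₁ + (n : ℂ) * ω₂‖ ^ 2) := (hconv _ _).symm
        _ ≤ g w₀ * Real.exp (α * ‖w + (m : ℂ) * ω₁ + (n : ℂ) * ω₂‖ ^ 2) :=
            mul_le_mul_of_nonneg_right h1 (Real.exp_pos _).le
  · -- no admissible points at all
    refine ⟨1, 1, one_pos, le_refl _, ?_⟩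
    intro z hz
    exfalso
    obtain ⟨w, hwK, m, n, rfl⟩ := hrep z
    have hdz : Metric.infDist w Λ = Metric.infDist (w + (m : ℂ) * ω₁ + (n : ℂ) * ω₂) Λ :=
      (hID w m n).symm
    exact hSne ⟨w, hwK, by simp only [Set.mem_setOf_eq]; rw [hdz]; exact hz.le⟩
end

section
/- If f ∈ L²(ℝ) is odd, continuous, with Gaussian decay, then for Λ = aℤ × bℤ with ab = 1/2, the quantity |Z_a f(x,ξ)|² + |Z_a f(x − a/2, ξ)|² vanishes at (x,ξ) = (a/2, 0); consequently its infimum over [0,a) × [0,1) is 0. -/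
/-- The Zak transform `Z_a f (x, ξ) = ∑_{k ∈ ℤ} f(x - ak) e^{2πiakξ}`. -/
noncomputable def zak (a : ℝ) (f : ℝ → ℂ) (x ξ : ℝ) : ℂ :=
  ∑' k : ℤ, f (x - a * k) *
    Complex.exp (2 * (Real.pi : ℂ) * Complex.I * (a : ℂ) * (k : ℂ) * (ξ : ℂ))

lemma zak_at_zero (a : ℝ) (f : ℝ → ℂ) (x : ℝ) :
    zak a f x 0 = ∑' k : ℤ, f (x - a * k) := by
  unfold zak
  refine tsum_congr fun k => ?_
  simp

lemma tsum_zero_of_antisym (g : ℤ → ℂ) (e : ℤ ≃ ℤ) (h : ∀ k, g (e k) = - g k) :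
    ∑' k : ℤ, g k = 0 := by
  have h1 : ∑' k : ℤ, g (e k) = ∑' k : ℤ, g k := e.tsum_eq g
  have h2 : ∑' k : ℤ, g (e k) = - ∑' k : ℤ, g k := by
    calc ∑' k : ℤ, g (e k) = ∑' k : ℤ, -g k := tsum_congr h
    _ = - ∑' k : ℤ, g k := tsum_neg
  have h3 : (2 : ℂ) * ∑' k : ℤ, g k = 0 := by
    rw [h1] at h2; linear_combination h2
  have := mul_eq_zero.mp h3
  simpa using this

theorem zak_criterion_fails_half_density (a b : ℝ) (ha : 0 < a) (hb : 0 < b)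
    (hab : a * b = 1 / 2) (f : ℝ → ℂ) (hcont : Continuous f)
    (hodd : ∀ t : ℝ, f (-t) = -f t)
    (c C : ℝ) (hc : 0 < c) (hC : 0 < C)
    (hdecay : ∀ t : ℝ, ‖f t‖ ≤ C * Real.exp (-c * t ^ 2)) :
    (‖zak a f (a / 2) 0‖ ^ 2 + ‖zak a f (a / 2 - a / 2) 0‖ ^ 2 = 0) ∧
    sInf ((fun p : ℝ × ℝ => ‖zak a f p.1 p.2‖ ^ 2 + ‖zak a f (p.1 - a / 2) p.2‖ ^ 2) ''
        (Set.Ico 0 a ×ˢ Set.Ico 0 1)) = 0 := by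
  have hz1 : zak a f (a / 2) 0 = 0 := by
    rw [zak_at_zero]
    refine tsum_zero_of_antisym _ (Equiv.subLeft (1 : ℤ)) fun k => ?_
    have h1 : a / 2 - a * ((Equiv.subLeft (1 : ℤ)) k : ℤ) = -(a / 2 - a * k) := by
      simp [Equiv.subLeft]
      push_cast
      ring
    rw [h1, hodd]
  have hz2 : zak a f (a / 2 - a / 2) 0 = 0 := by
    rw [zak_at_zero]
    refine tsum_zero_of_antisym _ (Equiv.neg ℤ) fun k => ?_
    have h1 : a / 2 - a / 2 - a * ((Equiv.neg ℤ) k : ℤ) = -(a / 2 - a / 2 - a * k) := by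
      simp only [Equiv.neg_apply]
      push_cast
      ring
    rw [h1, hodd]
  have hmain : ‖zak a f (a / 2) 0‖ ^ 2 + ‖zak a f (a / 2 - a / 2) 0‖ ^ 2 = 0 := by
    rw [hz1, hz2]; simp
  refine ⟨hmain, ?_⟩
  have hmem : (0 : ℝ) ∈ ((fun p : ℝ × ℝ =>
      ‖zak a f p.1 p.2‖ ^ 2 + ‖zak a f (p.1 - a / 2) p.2‖ ^ 2) ''
      (Set.Ico 0 a ×ˢ Set.Ico 0 1)) := by
    refine ⟨(a / 2, 0), ⟨⟨by linarith, by linarith⟩, ⟨le_refl _, one_pos⟩⟩, ?_⟩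
    simpa using hmain
  have hbdd : ∀ y ∈ ((fun p : ℝ × ℝ =>
      ‖zak a f p.1 p.2‖ ^ 2 + ‖zak a f (p.1 - a / 2) p.2‖ ^ 2) ''
      (Set.Ico 0 a ×ˢ Set.Ico 0 1)), (0 : ℝ) ≤ y := by
    rintro y ⟨p, -, rfl⟩
    positivity
  exact le_antisymm (csInf_le ⟨0, hbdd⟩ hmem) (le_csInf ⟨0, hmem⟩ hbdd)
end
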